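/- Let A₀ be a symmetric positive definite N×N matrix, B a symmetric N×N matrix, and Π an invertible matrix such that Π⁻¹BΠ = diag(Λ₊, 0, Λ₋) with Λ₊ ∈ ℝ^{p×p} diagonal with positive entries and Λ₋ ∈ ℝ^{n×n} diagonal with negative entries, and suppose A₀B is symmetric. Then ΠᵀA₀Π is block diagonal: ΠᵀA₀Π = diag(X₊, X₀, X₋) with X₊, X₀, X₋ symmetric positive definite of sizes p, N−p−n, n respectively. -/

import Mathlib

/-!
Put `M = Πᵀ A₀ Π` and `D = Π⁻¹ B Π`. Then `M D = Πᵀ (A₀ B) Π` is symmetric, so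
`D M = (M D)ᵀ = M D`: the congruent symmetrizer commutes with the diagonal matrix `D`. A matrix
commuting with a diagonal matrix has vanishing entries between distinct diagonal values, and the
three blocks of `D` have disjoint spectra (positive, zero, negative), so `M` is block diagonal.
Its diagonal blocks are positive definite because `M`, a congruence of `A₀`, is.
-/

open Matrix

namespace Matrix

variable {ι κ α β R : Type*} [Fintype ι]

theorem IsSymm.transpose_mul_mul [Fintype κ] [CommSemiring R] {S : Matrix ι ι R}
    (hS : S.IsSymm) (P : Matrix ι κ R) : (Pᵀ * S * P).IsSymm := by
  simp only [IsSymm, transpose_mul, transpose_transpose, hS.eq, Matrix.mul_assoc]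

variable [DecidableEq ι]

theorem commute_diagonal_of_isSymm_mul_diagonal [CommSemiring R] {M : Matrix ι ι R}
    {d : ι → R} (hM : M.IsSymm) (hMd : (M * diagonal d).IsSymm) :
    Commute (diagonal d) M :=
  (commute_iff_eq _ _).mpr <| by
    simpa only [IsSymm, transpose_mul, diagonal_transpose, hM.eq] using hMd.eq

theorem commute_diagonal_transpose_mul_mul [CommRing R] {A B P : Matrix ι ι R} {d : ι → R}
    (hA : A.IsSymm) (hAB : (A * B).IsSymm) (hP : IsUnit P.det)
    (hD : P⁻¹ * B * P = diagonal d) : Commute (diagonal d) (Pᵀ * A * P) := by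
  have hMD : Pᵀ * A * P * diagonal d = Pᵀ * (A * B) * P := by
    rw [← hD, Matrix.mul_assoc _ P, ← Matrix.mul_assoc P, ← Matrix.mul_assoc P,
      mul_nonsing_inv P hP, Matrix.one_mul]
    simp only [Matrix.mul_assoc]
  exact commute_diagonal_of_isSymm_mul_diagonal (hA.transpose_mul_mul P)
    (hMD ▸ hAB.transpose_mul_mul P)

theorem apply_eq_zero_of_commute_diagonal [CommRing R] [NoZeroDivisors R] {M : Matrix ι ι R}
    {d : ι → R} (hM : Commute (diagonal d) M) {i j : ι} (hij : d i ≠ d j) : M i j = 0 := by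
  have h := congr_fun₂ hM.eq i j
  rw [diagonal_mul, mul_diagonal] at h
  have : (d i - d j) * M i j = 0 := by linear_combination h
  exact (mul_eq_zero.mp this).resolve_left (sub_ne_zero.mpr hij)

theorem Commute.submatrix_diagonal [Fintype κ] [DecidableEq κ] [CommSemiring R]
    {M : Matrix ι ι R} {d : ι → R} (hM : Commute (diagonal d) M) (e : κ → ι) :
    Commute (diagonal (d ∘ e)) (M.submatrix e e) := by
  ext i j
  simpa only [diagonal_mul, mul_diagonal, submatrix_apply, Function.comp_apply]
    using congr_fun₂ hM.eq (e i) (e j)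

theorem exists_fromBlocks_of_commute_diagonal [Fintype α] [Fintype β] [DecidableEq α]
    [DecidableEq β] [CommRing R] [NoZeroDivisors R] {M : Matrix (α ⊕ β) (α ⊕ β) R}
    {d₁ : α → R} {d₂ : β → R} (hd : ∀ a b, d₁ a ≠ d₂ b)
    (hM : Commute (diagonal (Sum.elim d₁ d₂)) M) :
    ∃ (M₁ : Matrix α α R) (M₂ : Matrix β β R), Commute (diagonal d₁) M₁ ∧
      Commute (diagonal d₂) M₂ ∧ M = fromBlocks M₁ 0 0 M₂ := by
  refine ⟨M.toBlocks₁₁, M.toBlocks₂₂, hM.submatrix_diagonal Sum.inl,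
    hM.submatrix_diagonal Sum.inr, ?_⟩
  conv_lhs => rw [← fromBlocks_toBlocks M]
  congr 1 <;> ext a b
  · exact apply_eq_zero_of_commute_diagonal hM (hd a b)
  · exact apply_eq_zero_of_commute_diagonal hM (hd b a).symm

variable [Ring R] [PartialOrder R] [StarRing R] {M : Matrix (α ⊕ β) (α ⊕ β) R}

theorem PosDef.toBlocks₁₁ (hM : M.PosDef) : M.toBlocks₁₁.PosDef :=
  hM.submatrix Sum.inl_injective

theorem PosDef.toBlocks₂₂ (hM : M.PosDef) : M.toBlocks₂₂.PosDef :=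
  hM.submatrix Sum.inr_injective

end Matrix

theorem symmetrizer_block_diagonal_general (p m n : ℕ)
    (A₀ B Pm : Matrix (Fin p ⊕ (Fin m ⊕ Fin n)) (Fin p ⊕ (Fin m ⊕ Fin n)) ℝ)
    (hA₀ : A₀.PosDef) (hA₀B : (A₀ * B).IsSymm)
    (hPm : IsUnit Pm.det)
    (dp : Fin p → ℝ) (hdp : ∀ i, 0 < dp i)
    (dn : Fin n → ℝ) (hdn : ∀ i, dn i < 0)
    (hdiag : Pm⁻¹ * B * Pm
      = Matrix.fromBlocks (Matrix.diagonal dp) 0 0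
          (Matrix.fromBlocks (0 : Matrix (Fin m) (Fin m) ℝ) 0 0 (Matrix.diagonal dn))) :
    ∃ (Xp : Matrix (Fin p) (Fin p) ℝ) (X0 : Matrix (Fin m) (Fin m) ℝ)
      (Xn : Matrix (Fin n) (Fin n) ℝ),
      Xp.PosDef ∧ X0.PosDef ∧ Xn.PosDef ∧
      Pmᵀ * A₀ * Pm = Matrix.fromBlocks Xp 0 0 (Matrix.fromBlocks X0 0 0 Xn) := by
  set d := Sum.elim dp (Sum.elim (fun _ : Fin m => (0 : ℝ)) dn)
  have hD : Pm⁻¹ * B * Pm = diagonal d := by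
    rw [hdiag, ← diagonal_zero, fromBlocks_diagonal, fromBlocks_diagonal]
  have hM : (Pmᵀ * A₀ * Pm).PosDef := by
    simpa only [conjTranspose_eq_transpose_of_trivial] using hA₀.conjTranspose_mul_mul_same
      (mulVec_injective_of_isUnit ((isUnit_iff_isUnit_det Pm).2 hPm))
  have hcomm : Commute (diagonal d) (Pmᵀ * A₀ * Pm) :=
    commute_diagonal_transpose_mul_mul (isHermitian_iff_isSymm.mp hA₀.1) hA₀B hPm hD
  have hd₀ : ∀ b, Sum.elim (fun _ : Fin m => (0 : ℝ)) dn b ≤ 0 := by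
    rintro (_ | c)
    exacts [le_rfl, (hdn c).le]
  obtain ⟨Xp, M', -, hM', hsplit⟩ := exists_fromBlocks_of_commute_diagonal
    (fun a b => ((hd₀ b).trans_lt (hdp a)).ne') hcomm
  obtain ⟨X0, Xn, -, -, rfl⟩ :=
    exists_fromBlocks_of_commute_diagonal (fun _ c => (hdn c).ne') hM'
  rw [hsplit] at hM
  refine ⟨Xp, X0, Xn, ?_, ?_, ?_, hsplit⟩
  · simpa using hM.toBlocks₁₁
  · simpa using hM.toBlocks₂₂.toBlocks₁₁
  · simpa using hM.toBlocks₂₂.toBlocks₂₂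

/-- Lemma 2.1 of the appendix: if `A₀` is symmetric positive definite, `A₀ B` is
symmetric, and `Pm` diagonalizes the symmetric boundary matrix `B` as
`Pm⁻¹ B Pm = diag(Λ₊, 0, Λ₋)` with `Λ₊` diagonal positive and `Λ₋` diagonal negative,
then `Pmᵀ A₀ Pm` is block diagonal with symmetric positive definite blocks. -/
theorem symmetrizer_block_diagonal (p m n : ℕ)
    (A₀ B Pm : Matrix (Fin p ⊕ (Fin m ⊕ Fin n)) (Fin p ⊕ (Fin m ⊕ Fin n)) ℝ)
    (hA₀ : A₀.PosDef) (hB : B.IsSymm) (hA₀B : (A₀ * B).IsSymm)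
    (hPm : IsUnit Pm.det)
    (dp : Fin p → ℝ) (hdp : ∀ i, 0 < dp i)
    (dn : Fin n → ℝ) (hdn : ∀ i, dn i < 0)
    (hdiag : Pm⁻¹ * B * Pm
      = Matrix.fromBlocks (Matrix.diagonal dp) 0 0
          (Matrix.fromBlocks (0 : Matrix (Fin m) (Fin m) ℝ) 0 0 (Matrix.diagonal dn))) :
    ∃ (Xp : Matrix (Fin p) (Fin p) ℝ) (X0 : Matrix (Fin m) (Fin m) ℝ)
      (Xn : Matrix (Fin n) (Fin n) ℝ),
      Xp.PosDef ∧ X0.PosDef ∧ Xn.PosDef ∧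
      Pmᵀ * A₀ * Pm = Matrix.fromBlocks Xp 0 0 (Matrix.fromBlocks X0 0 0 Xn) :=
  symmetrizer_block_diagonal_general p m n A₀ B Pm hA₀ hA₀B hPm dp hdp dn hdn hdiag
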